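/- arXiv:2507.09803 — 2 statements merged into one kernel-verified Lean document; each statement's English description precedes it below -/
import Mathlib

section
/- Let N ≥ 1, let p_1,…,p_N, p̄_1,…,p̄_N, q_1,…,q_N, q̄_1,…,q̄_N ∈ ℂ be nonzero with p_i + p̄_j ≠ 0 and q_i + q̄_j ≠ 0 for all i,j, let μ, ν ∈ ℂ, and let a₁, a₂, b₁, b₂ ∈ ℝ be nonzero with 1 − a₁ p_i ≠ 0, 1 + a₁ p̄_j ≠ 0, 1 − a₂ q_i ≠ 0, 1 + a₂ q̄_j ≠ 0, 1 − b₁/p_i ≠ 0, 1 + b₁/p̄_j ≠ 0, 1 − b₂/q_i ≠ 0, 1 + b₂/q̄_j ≠ 0 for all i,j. With the tau functions f^{m,k₂,l₂}_{n,k₁,l₁} = det[[A(n,k₁,l₁), I],[−I, B(m,k₂,l₂)]], g^{m,k₂,l₂}_{n,k₁,l₁} = det[[A(n,k₁,l₁), I, Φ(n,k₁,l₁)ᵀ],[−I, B(m,k₂,l₂), 0],[0, −Ψ̄(m,k₂,l₂), 0]], and ḡ^{m,k₂,l₂}_{n,k₁,l₁} = det[[Ã(n,k₁,l₁), I, 0],[−I,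 B(m,k₂,l₂), Ψ(m,k₂,l₂)ᵀ],[−Φ̄(n,k₁,l₁), 0, 0]], where A has entries (μ p̄_j/(p_i+p̄_j))·(−p_i/p̄_j)^n·((1−a₁p_i)/(1+a₁p̄_j))^{−k₁}·((1−b₁/p_i)/(1+b₁/p̄_j))^{−l₁}, Ã has entries (−μ p_i/(p_i+p̄_j))·(−p_i/p̄_j)^n·((1−a₁p_i)/(1+a₁p̄_j))^{−k₁}·((1−b₁/p_i)/(1+b₁/p̄_j))^{−l₁}, B has entries (ν/(q_i+q̄_j))·(−q_i/q̄_j)^m·((1−a₂q_i)/(1+a₂q̄_j))^{−k₂}·((1−b₂/q_i)/(1+b₂/q̄_j))^{−l₂}, Φ has j-th entry p_j^n (1−a₁p_j)^{−k₁}(1−b₁/p_j)^{−l₁}, Φ̄ has j-th entry (−p̄_j)^{−n}(1+a₁p̄_j)^{k₁}(1+b₁/p̄_j)^{l₁}, Ψ has j-th entry q_j^m (1−a₂q_j)^{−k₂}(1−b₂/q_j)^{−l₂}, and Ψ̄ has j-th entry (−q̄_j)^{−m}(1+a₂q̄_j)^{k₂}(1+b₂/q̄_j)^{l₂}, the following holds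 for all n, k₁, l₁, m, k₂, l₂ ∈ ℤ: (1/b₂)·(f^{m,k₂,l₂+1}_{n+1,k₁,l₁}·f^{m,k₂,l₂}_{n,k₁,l₁} − f^{m,k₂,l₂}_{n+1,k₁,l₁}·f^{m,k₂,l₂+1}_{n,k₁,l₁}) = −μ·ν·g^{m+1,k₂,l₂}_{n,k₁,l₁}·ḡ^{m−1,k₂,l₂+1}_{n,k₁,l₁}. -/
open Matrix Polynomial




/-- Determinant of the 2N×2N block matrix `[[A, I], [−I, B]]`. -/
noncomputable def blockDet {N : ℕ} (A B : Matrix (Fin N) (Fin N) ℂ) : ℂ :=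
  (Matrix.fromBlocks A (1 : Matrix (Fin N) (Fin N) ℂ)
    (-1 : Matrix (Fin N) (Fin N) ℂ) B).det

/-- Determinant of the bordered (2N+1)×(2N+1) matrix obtained from the block matrix
`[[A, I], [−I, B]]` by appending the column vector `col` on the right and the row
vector `row` at the bottom, with `0` in the corner. -/
noncomputable def borderedDet {N : ℕ} (A B : Matrix (Fin N) (Fin N) ℂ)
    (col row : (Fin N ⊕ Fin N) → ℂ) : ℂ :=
  (Matrix.fromBlocks
    (Matrix.fromBlocks A (1 : Matrix (Fin N) (Fin N) ℂ)
      (-1 : Matrix (Fin N) (Fin N) ℂ) B)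
    (Matrix.of fun i (_ : Fin 1) => col i)
    (Matrix.of fun (_ : Fin 1) j => row j)
    (0 : Matrix (Fin 1) (Fin 1) ℂ)).det




variable {ι : Type*} [Fintype ι] [DecidableEq ι]

noncomputable def bdet {R : Type*} [CommRing R] (M : Matrix ι ι R) (c r : ι → R) : R :=
  (Matrix.fromBlocks M (Matrix.of fun i (_ : Fin 1) => c i)
    (Matrix.of fun (_ : Fin 1) j => r j) (0 : Matrix (Fin 1) (Fin 1) R)).det

lemma bdet_of_isUnit (M : Matrix ι ι ℂ) (h : IsUnit M.det) (c r : ι → ℂ) :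
    bdet M c r = -(M.det * (r ⬝ᵥ M⁻¹ *ᵥ c)) := by
  letI := M.invertibleOfIsUnitDet h
  rw [bdet, det_fromBlocks₁₁, invOf_eq_nonsing_inv]
  rw [det_fin_one]
  simp [Matrix.mul_apply, Matrix.mulVec, dotProduct, Finset.mul_sum, Finset.sum_mul]
  rw [Finset.sum_comm]
  ring_nf

lemma det_add_two (M : Matrix ι ι ℂ) (h : IsUnit M.det) (c₁ r₁ c₂ r₂ : ι → ℂ) :
    (M + vecMulVec c₁ r₁ + vecMulVec c₂ r₂).det =
      M.det * ((1 + r₁ ⬝ᵥ M⁻¹ *ᵥ c₁) * (1 + r₂ ⬝ᵥ M⁻¹ *ᵥ c₂)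
        - (r₁ ⬝ᵥ M⁻¹ *ᵥ c₂) * (r₂ ⬝ᵥ M⁻¹ *ᵥ c₁)) := by
  classical
  set U : Matrix ι (Fin 2) ℂ := Matrix.of fun i k => if k = 0 then c₁ i else c₂ i with hU
  set V : Matrix (Fin 2) ι ℂ := Matrix.of fun k j => if k = 0 then r₁ j else r₂ j with hV
  have hUV : vecMulVec c₁ r₁ + vecMulVec c₂ r₂ = U * V := by
    ext i j
    simp [Matrix.mul_apply, Fin.sum_univ_two, vecMulVec, hU, hV]
  have hM : M + U * V = M * (1 + M⁻¹ * U * V) := by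
    rw [Matrix.mul_add, Matrix.mul_one, ← Matrix.mul_assoc, ← Matrix.mul_assoc,
      Matrix.mul_nonsing_inv M h, Matrix.one_mul]
  rw [add_assoc, hUV, hM, det_mul, det_one_add_mul_comm (M⁻¹ * U) V]
  congr 1
  rw [det_fin_two]
  have e : ∀ (a : Fin 2) (b : Fin 2), (V * (M⁻¹ * U)) a b =
      (if a = 0 then r₁ else r₂) ⬝ᵥ M⁻¹ *ᵥ (if b = 0 then c₁ else c₂) := by
    intro a b
    by_cases ha : a = 0 <;> by_cases hb : b = 0 <;>
      simp [Matrix.mul_apply, Matrix.mulVec, dotProduct, Finset.mul_sum, hU, hV, ha, hb]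
  simp only [Matrix.add_apply, Matrix.one_apply, e]
  norm_num

lemma vecMulVec_zero_zero : vecMulVec (0 : ι → ℂ) (0 : ι → ℂ) = 0 := by
  ext i j; simp [vecMulVec]

lemma det_add_one (M : Matrix ι ι ℂ) (h : IsUnit M.det) (c r : ι → ℂ) :
    (M + vecMulVec c r).det = M.det * (1 + r ⬝ᵥ M⁻¹ *ᵥ c) := by
  have := det_add_two M h c r 0 0
  rw [vecMulVec_zero_zero, add_zero] at this
  simpa using this

lemma master_aux (M : Matrix ι ι ℂ) (h : IsUnit M.det) (c₁ r₁ c₂ r₂ : ι → ℂ) :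
    M.det * (M + vecMulVec c₁ r₁ + vecMulVec c₂ r₂).det =
      (M + vecMulVec c₁ r₁).det * (M + vecMulVec c₂ r₂).det
        - bdet M c₁ r₂ * bdet M c₂ r₁ := by
  rw [det_add_two M h, det_add_one M h, det_add_one M h, bdet_of_isUnit M h, bdet_of_isUnit M h]
  ring

lemma evalDetAux {κ : Type*} [Fintype κ] [DecidableEq κ] (t : ℂ) (Np : Matrix κ κ ℂ[X]) :
    eval t Np.det = (Np.map (eval t)).det := by
  rw [← coe_evalRingHom, RingHom.map_det, RingHom.mapMatrix_apply, coe_evalRingHom]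

lemma master (M : Matrix ι ι ℂ) (c₁ r₁ c₂ r₂ : ι → ℂ) :
    M.det * (M + vecMulVec c₁ r₁ + vecMulVec c₂ r₂).det =
      (M + vecMulVec c₁ r₁).det * (M + vecMulVec c₂ r₂).det
        - bdet M c₁ r₂ * bdet M c₂ r₁ := by
  classical
  set Mp : Matrix ι ι ℂ[X] := charmatrix (-M) with hMp
  have hmap : ∀ t : ℂ, Mp.map (eval t) = M + t • (1 : Matrix ι ι ℂ) := by
    intro t; ext i j
    by_cases hij : i = j
    · subst hij
      simp [hMp, charmatrix_apply_eq, Matrix.map_apply, Matrix.one_apply, add_comm]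
    · simp [hMp, charmatrix_apply_ne _ _ _ hij, Matrix.map_apply, Matrix.one_apply, hij]
  have hmapv : ∀ (t : ℂ) (u v : ι → ℂ),
      (vecMulVec (fun i => C (u i)) (fun j => C (v j))).map (eval t) = vecMulVec u v := by
    intro t u v; ext i j; simp [vecMulVec_apply, Matrix.map_apply]
  have hmapadd : ∀ (t : ℂ) (P Q : Matrix ι ι ℂ[X]),
      (P + Q).map (eval t) = P.map (eval t) + Q.map (eval t) := by
    intro t P Q; ext i j; simp [Matrix.map_apply]
  set c₁' : ι → ℂ[X] := fun i => C (c₁ i)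
  set r₁' : ι → ℂ[X] := fun i => C (r₁ i)
  set c₂' : ι → ℂ[X] := fun i => C (c₂ i)
  set r₂' : ι → ℂ[X] := fun i => C (r₂ i)
  have hmapbdet : ∀ (t : ℂ) (P : Matrix ι ι ℂ[X]) (u v : ι → ℂ),
      eval t (bdet P (fun i => C (u i)) (fun j => C (v j))) = bdet (P.map (eval t)) u v := by
    intro t P u v
    rw [bdet, evalDetAux, bdet]
    congr 1
    ext i j
    cases i <;> cases j <;>
      simp [Matrix.map_apply, Matrix.fromBlocks_apply₁₁, Matrix.fromBlocks_apply₁₂,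
        Matrix.fromBlocks_apply₂₁, Matrix.fromBlocks_apply₂₂]
  set PL : ℂ[X] := Mp.det * (Mp + vecMulVec c₁' r₁' + vecMulVec c₂' r₂').det with hPL
  set PR : ℂ[X] := (Mp + vecMulVec c₁' r₁').det * (Mp + vecMulVec c₂' r₂').det
      - bdet Mp c₁' r₂' * bdet Mp c₂' r₁' with hPR
  have hevL : ∀ t : ℂ, eval t PL = (M + t • 1).det *
      ((M + t • 1) + vecMulVec c₁ r₁ + vecMulVec c₂ r₂).det := by
    intro t
    rw [hPL, eval_mul, evalDetAux, evalDetAux, hmapadd, hmapadd, hmap, hmapv, hmapv]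
  have hevR : ∀ t : ℂ, eval t PR = ((M + t • 1) + vecMulVec c₁ r₁).det *
      ((M + t • 1) + vecMulVec c₂ r₂).det
        - bdet (M + t • 1) c₁ r₂ * bdet (M + t • 1) c₂ r₁ := by
    intro t
    rw [hPR, eval_sub, eval_mul, eval_mul, evalDetAux, evalDetAux, hmapadd, hmapadd, hmap,
      hmapv, hmapv, hmapbdet, hmapbdet, hmap]
  have hSfin : {t : ℂ | eval t Mp.det = 0}.Finite := by
    have hne : Mp.det ≠ 0 := by
      have h0 : Mp.det = (-M).charpoly := rfl
      rw [h0]; exact ((-M).charpoly_monic).ne_zero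
    exact Polynomial.finite_setOf_isRoot hne
  have hinf : {t : ℂ | eval t PL = eval t PR}.Infinite := by
    apply Set.Infinite.mono _ hSfin.infinite_compl
    intro t ht
    have hu : IsUnit (M + t • (1 : Matrix ι ι ℂ)).det := by
      rw [isUnit_iff_ne_zero]
      intro h0
      apply ht
      show eval t Mp.det = 0
      rw [evalDetAux, hmap]; exact h0
    show eval t PL = eval t PR
    rw [hevL, hevR]
    exact master_aux _ hu c₁ r₁ c₂ r₂
  have hEq : PL = PR := Polynomial.eq_of_infinite_eval_eq _ _ hinf
  have := congrArg (eval 0) hEq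
  rw [hevL, hevR] at this
  simpa using this

lemma bdet_col_absorb (M : Matrix ι ι ℂ) (c r w : ι → ℂ) :
    bdet (M + vecMulVec c w) c r = bdet M c r := by
  have key : (Matrix.fromBlocks (M + vecMulVec c w) (Matrix.of fun i (_ : Fin 1) => c i)
      (Matrix.of fun (_ : Fin 1) j => r j) (0 : Matrix (Fin 1) (Fin 1) ℂ)) =
      (Matrix.fromBlocks M (Matrix.of fun i (_ : Fin 1) => c i)
        (Matrix.of fun (_ : Fin 1) j => r j) (0 : Matrix (Fin 1) (Fin 1) ℂ)) *
      (Matrix.fromBlocks 1 0 (Matrix.of fun (_ : Fin 1) j => w j) 1) := by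
    rw [Matrix.fromBlocks_multiply]
    ext i j
    cases i <;> cases j <;>
      simp [Matrix.add_apply, Matrix.mul_apply, vecMulVec_apply, Fin.sum_univ_one]
  rw [bdet, key, det_mul, det_fromBlocks_zero₁₂, det_one, det_one, one_mul, mul_one, bdet]

lemma bdet_row_absorb (M : Matrix ι ι ℂ) (c r u : ι → ℂ) :
    bdet (M + vecMulVec u r) c r = bdet M c r := by
  have key : (Matrix.fromBlocks (M + vecMulVec u r) (Matrix.of fun i (_ : Fin 1) => c i)
      (Matrix.of fun (_ : Fin 1) j => r j) (0 : Matrix (Fin 1) (Fin 1) ℂ)) =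
      (Matrix.fromBlocks 1 (Matrix.of fun i (_ : Fin 1) => u i) 0 1) *
      (Matrix.fromBlocks M (Matrix.of fun i (_ : Fin 1) => c i)
        (Matrix.of fun (_ : Fin 1) j => r j) (0 : Matrix (Fin 1) (Fin 1) ℂ)) := by
    rw [Matrix.fromBlocks_multiply]
    ext i j
    cases i <;> cases j <;>
      simp [Matrix.add_apply, Matrix.mul_apply, vecMulVec_apply, Fin.sum_univ_one]
  rw [bdet, key, det_mul, det_fromBlocks_zero₂₁, det_one, det_one, one_mul, one_mul, bdet]

lemma bdet_smul_col (M : Matrix ι ι ℂ) (c r : ι → ℂ) (κ : ℂ) :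
    bdet M (fun i => κ * c i) r = κ * bdet M c r := by
  have key : (Matrix.fromBlocks M (Matrix.of fun i (_ : Fin 1) => κ * c i)
      (Matrix.of fun (_ : Fin 1) j => r j) (0 : Matrix (Fin 1) (Fin 1) ℂ)) =
      (Matrix.fromBlocks M (Matrix.of fun i (_ : Fin 1) => c i)
        (Matrix.of fun (_ : Fin 1) j => r j) (0 : Matrix (Fin 1) (Fin 1) ℂ)) *
      (Matrix.fromBlocks 1 0 0 (κ • (1 : Matrix (Fin 1) (Fin 1) ℂ))) := by
    rw [Matrix.fromBlocks_multiply]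
    ext i j
    cases i <;> cases j <;>
      simp [Matrix.mul_apply, Matrix.one_apply, Fin.sum_univ_one, mul_comm]
  rw [bdet, key, det_mul, det_fromBlocks_zero₂₁, det_one, one_mul, bdet, det_fin_one]
  simp [mul_comm]

lemma bdet_smul_row (M : Matrix ι ι ℂ) (c r : ι → ℂ) (κ : ℂ) :
    bdet M c (fun j => κ * r j) = κ * bdet M c r := by
  have key : (Matrix.fromBlocks M (Matrix.of fun i (_ : Fin 1) => c i)
      (Matrix.of fun (_ : Fin 1) j => κ * r j) (0 : Matrix (Fin 1) (Fin 1) ℂ)) =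
      (Matrix.fromBlocks 1 0 0 (κ • (1 : Matrix (Fin 1) (Fin 1) ℂ))) *
      (Matrix.fromBlocks M (Matrix.of fun i (_ : Fin 1) => c i)
        (Matrix.of fun (_ : Fin 1) j => r j) (0 : Matrix (Fin 1) (Fin 1) ℂ)) := by
    rw [Matrix.fromBlocks_multiply]
    ext i j
    cases i <;> cases j <;>
      simp [Matrix.mul_apply, Matrix.one_apply, Fin.sum_univ_one, mul_comm]
  rw [bdet, key, det_mul, det_fromBlocks_zero₂₁, det_one, one_mul, bdet, det_fin_one]
  simp [mul_comm]


private lemma zpow_negsucc (a : ℂ) (ha : a ≠ 0) (l : ℤ) : a^(-(l+1)) = (a^l)⁻¹ * a⁻¹ := by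
  rw [neg_add, zpow_add₀ ha, _root_.zpow_neg, _root_.zpow_neg_one]

private lemma core1 (μ x y : ℂ) (hx : x ≠ 0) (hy : y ≠ 0) (hxy : x + y ≠ 0) :
    μ * y / (x + y) = μ * y / (x + y) * (x / -y) + μ := by
  field_simp
  ring

private lemma core5 (μ x y : ℂ) (hx : x ≠ 0) (hy : y ≠ 0) (hxy : x + y ≠ 0) :
    -μ * x / (x + y) = μ * y / (x + y) * (x / -y) := by
  field_simp

private lemma core3 (ν x y : ℂ) (hx : x ≠ 0) (hy : y ≠ 0) (hxy : x + y ≠ 0) :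
    ν / (x+y) * (x / -y) = ν/(x+y) + ν * (-y)⁻¹ := by
  rw [inv_neg, div_neg]
  field_simp
  ring

private lemma core2 (ν b x y : ℂ) (hx : x ≠ 0) (hy : y ≠ 0) (hxy : x + y ≠ 0)
    (hLa : 1 - b/x ≠ 0) (hLb : 1 + b/y ≠ 0) :
    ν / (x+y) * ((1+b/y) * (1-b/x)⁻¹) = ν/(x+y) + (-(b*ν)) * (x⁻¹ * (1-b/x)⁻¹) * (-y)⁻¹ := by
  have ex : (1 - b/x) = (x-b)/x := by field_simp
  have ey : (1 + b/y) = (y+b)/y := by field_simp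
  have hxb : x - b ≠ 0 := by
    intro h; apply hLa; rw [ex, h, zero_div]
  rw [ex, ey]
  field_simp
  ring

private lemma core4 (ν b x y : ℂ) (hx : x ≠ 0) (hy : y ≠ 0) (hxy : x + y ≠ 0) (hb : b ≠ 0)
    (hLa : 1 - b/x ≠ 0) (hLb : 1 + b/y ≠ 0) :
    ν / (x+y) * (x⁻¹ * -y * ((1+b/y) * (1-b/x)⁻¹))
      = ν/(x+y) + (-(b*ν)) * (x⁻¹ * (1-b/x)⁻¹) * b⁻¹ := by
  have ex : (1 - b/x) = (x-b)/x := by field_simp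
  have ey : (1 + b/y) = (y+b)/y := by field_simp
  have hxb : x - b ≠ 0 := by
    intro h; apply hLa; rw [ex, h, zero_div]
  rw [ex, ey]
  field_simp
  ring

lemma sc5 (μ x y : ℂ) (hx : x ≠ 0) (hy : y ≠ 0) (hxy : x + y ≠ 0) (n : ℤ) :
    -μ * x / (x + y) * (-x/y)^n = μ * y / (x + y) * (-x/y)^(n+1) := by
  have hq : (-x/y : ℂ) ≠ 0 := div_ne_zero (neg_ne_zero.mpr hx) hy
  have hdiv : (-x/y : ℂ) = x / -y := by ring
  rw [zpow_add_one₀ hq, hdiv]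
  linear_combination ((x / -y : ℂ)^n) * core5 μ x y hx hy hxy

lemma sc1 (μ x y Ka Kb La Lb : ℂ) (hx : x ≠ 0) (hy : y ≠ 0) (hxy : x + y ≠ 0)
    (hKa : Ka ≠ 0) (hKb : Kb ≠ 0) (hLa : La ≠ 0) (hLb : Lb ≠ 0) (n k l : ℤ) :
    μ * y / (x + y) * (-x/y)^n * (Ka/Kb)^(-k) * (La/Lb)^(-l)
      = μ * y / (x + y) * (-x/y)^(n+1) * (Ka/Kb)^(-k) * (La/Lb)^(-l)
        + μ * (x^n * Ka^(-k) * La^(-l)) * ((-y)^(-n) * Kb^k * Lb^l) := by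
  have hny : (-y : ℂ) ≠ 0 := neg_ne_zero.mpr hy
  have hdiv : (-x/y : ℂ) = x / -y := by ring
  rw [hdiv]
  simp only [div_zpow]
  simp only [zpow_add_one₀ hx, zpow_add_one₀ hny]
  simp only [_root_.zpow_neg, div_eq_mul_inv, mul_inv, inv_inv]
  linear_combination (x^n * ((-y)^n)⁻¹ * (Ka^k)⁻¹ * Kb^k * (La^l)⁻¹ * Lb^l) *
    core1 μ x y hx hy hxy

lemma sc3 (ν x y Ka Kb La Lb : ℂ) (hx : x ≠ 0) (hy : y ≠ 0) (hxy : x + y ≠ 0)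
    (hKa : Ka ≠ 0) (hKb : Kb ≠ 0) (hLa : La ≠ 0) (hLb : Lb ≠ 0) (m k l : ℤ) :
    ν / (x+y) * (-x/y)^(m+1) * (Ka/Kb)^(-k) * (La/Lb)^(-l)
      = ν / (x+y) * (-x/y)^m * (Ka/Kb)^(-k) * (La/Lb)^(-l)
        + (ν * (x^m * Ka^(-k) * La^(-l))) * ((-y)^(-(m+1)) * Kb^k * Lb^l) := by
  have hny : (-y : ℂ) ≠ 0 := neg_ne_zero.mpr hy
  have hdiv : (-x/y : ℂ) = x / -y := by ring
  rw [hdiv]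
  simp only [div_zpow]
  simp only [zpow_add_one₀ hx, zpow_add_one₀ hny, zpow_negsucc (-y) hny]
  simp only [_root_.zpow_neg, div_eq_mul_inv, mul_inv, inv_inv]
  linear_combination (x^m * ((-y)^m)⁻¹ * (Ka^k)⁻¹ * Kb^k * (La^l)⁻¹ * Lb^l) *
    core3 ν x y hx hy hxy

lemma sc2 (ν b x y Ka Kb : ℂ) (hx : x ≠ 0) (hy : y ≠ 0) (hxy : x + y ≠ 0)
    (hKa : Ka ≠ 0) (hKb : Kb ≠ 0) (hLa : 1 - b/x ≠ 0) (hLb : 1 + b/y ≠ 0) (m k l : ℤ) :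
    ν / (x+y) * (-x/y)^m * (Ka/Kb)^(-k) * ((1-b/x)/(1+b/y))^(-(l+1))
      = ν / (x+y) * (-x/y)^m * (Ka/Kb)^(-k) * ((1-b/x)/(1+b/y))^(-l)
        + (-(b*ν) * (x^(m-1) * Ka^(-k) * (1-b/x)^(-(l+1))))
            * ((-y)^(-(m+1)) * Kb^k * (1+b/y)^l) := by
  have hny : (-y : ℂ) ≠ 0 := neg_ne_zero.mpr hy
  have hdiv : (-x/y : ℂ) = x / -y := by ring
  have hcore := core2 ν b x y hx hy hxy hLa hLb
  rw [hdiv]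
  set La : ℂ := 1 - b/x with hLadef
  set Lb : ℂ := 1 + b/y with hLbdef
  simp only [div_zpow]
  simp only [zpow_negsucc _ hLa, zpow_negsucc _ hLb, zpow_negsucc (-y) hny, zpow_sub_one₀ hx]
  simp only [_root_.zpow_neg, div_eq_mul_inv, mul_inv, inv_inv]
  linear_combination (x^m * ((-y)^m)⁻¹ * (Ka^k)⁻¹ * Kb^k * (La^l)⁻¹ * Lb^l) * hcore

lemma sc4 (ν b x y Ka Kb : ℂ) (hx : x ≠ 0) (hy : y ≠ 0) (hxy : x + y ≠ 0) (hb : b ≠ 0)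
    (hKa : Ka ≠ 0) (hKb : Kb ≠ 0) (hLa : 1 - b/x ≠ 0) (hLb : 1 + b/y ≠ 0) (m k l : ℤ) :
    ν / (x+y) * (-x/y)^(m-1) * (Ka/Kb)^(-k) * ((1-b/x)/(1+b/y))^(-(l+1))
      = ν / (x+y) * (-x/y)^m * (Ka/Kb)^(-k) * ((1-b/x)/(1+b/y))^(-l)
        + (-(b*ν) * (x^(m-1) * Ka^(-k) * (1-b/x)^(-(l+1))))
            * (((-y)^(-m) * Kb^k * (1+b/y)^l) / b) := by
  have hny : (-y : ℂ) ≠ 0 := neg_ne_zero.mpr hy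
  have hdiv : (-x/y : ℂ) = x / -y := by ring
  have hcore := core4 ν b x y hx hy hxy hb hLa hLb
  rw [hdiv]
  set La : ℂ := 1 - b/x with hLadef
  set Lb : ℂ := 1 + b/y with hLbdef
  simp only [div_zpow]
  simp only [zpow_negsucc _ hLa, zpow_negsucc _ hLb, zpow_sub_one₀ hx, zpow_sub_one₀ hny]
  simp only [_root_.zpow_neg, div_eq_mul_inv, mul_inv, inv_inv]
  linear_combination (x^m * ((-y)^m)⁻¹ * (Ka^k)⁻¹ * Kb^k * (La^l)⁻¹ * Lb^l) * hcore

lemma borderedDet_eq_bdet {N : ℕ} (A B : Matrix (Fin N) (Fin N) ℂ)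
    (c r : (Fin N ⊕ Fin N) → ℂ) :
    borderedDet A B c r = bdet (Matrix.fromBlocks A 1 (-1) B) c r := rfl

/-- Fourth fully discrete bilinear equation for the Gram-type tau functions of the
two-component fully discrete KP–Toda hierarchy. -/
theorem fully_discrete_bilinear_4 (N : ℕ) (hN : 1 ≤ N)
    (p pb q qb : Fin N → ℂ)
    (hp : ∀ i, p i ≠ 0) (hpb : ∀ i, pb i ≠ 0) (hq : ∀ i, q i ≠ 0) (hqb : ∀ i, qb i ≠ 0)
    (hppb : ∀ i j, p i + pb j ≠ 0) (hqqb : ∀ i j, q i + qb j ≠ 0)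
    (μ ν : ℂ)
    (a₁ a₂ b₁ b₂ : ℝ) (ha₁ : a₁ ≠ 0) (ha₂ : a₂ ≠ 0) (hb₁ : b₁ ≠ 0) (hb₂ : b₂ ≠ 0)
    (h1 : ∀ i, 1 - (a₁ : ℂ) * p i ≠ 0) (h2 : ∀ j, 1 + (a₁ : ℂ) * pb j ≠ 0)
    (h3 : ∀ i, 1 - (a₂ : ℂ) * q i ≠ 0) (h4 : ∀ j, 1 + (a₂ : ℂ) * qb j ≠ 0)
    (h5 : ∀ i, 1 - (b₁ : ℂ) / p i ≠ 0) (h6 : ∀ j, 1 + (b₁ : ℂ) / pb j ≠ 0)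
    (h7 : ∀ i, 1 - (b₂ : ℂ) / q i ≠ 0) (h8 : ∀ j, 1 + (b₂ : ℂ) / qb j ≠ 0)
    (A : ℤ → ℤ → ℤ → Matrix (Fin N) (Fin N) ℂ)
    (hA : ∀ n k₁ l₁ i j, A n k₁ l₁ i j =
      (μ * pb j / (p i + pb j)) * (-(p i) / pb j) ^ n *
      ((1 - (a₁ : ℂ) * p i) / (1 + (a₁ : ℂ) * pb j)) ^ (-k₁) *
      ((1 - (b₁ : ℂ) / p i) / (1 + (b₁ : ℂ) / pb j)) ^ (-l₁))
    (At : ℤ → ℤ → ℤ → Matrix (Fin N) (Fin N) ℂ)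
    (hAt : ∀ n k₁ l₁ i j, At n k₁ l₁ i j =
      (-μ * p i / (p i + pb j)) * (-(p i) / pb j) ^ n *
      ((1 - (a₁ : ℂ) * p i) / (1 + (a₁ : ℂ) * pb j)) ^ (-k₁) *
      ((1 - (b₁ : ℂ) / p i) / (1 + (b₁ : ℂ) / pb j)) ^ (-l₁))
    (B : ℤ → ℤ → ℤ → Matrix (Fin N) (Fin N) ℂ)
    (hB : ∀ m k₂ l₂ i j, B m k₂ l₂ i j =
      (ν / (q i + qb j)) * (-(q i) / qb j) ^ m *
      ((1 - (a₂ : ℂ) * q i) / (1 + (a₂ : ℂ) * qb j)) ^ (-k₂) *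
      ((1 - (b₂ : ℂ) / q i) / (1 + (b₂ : ℂ) / qb j)) ^ (-l₂))
    (Φ : ℤ → ℤ → ℤ → Fin N → ℂ)
    (hΦ : ∀ n k₁ l₁ j, Φ n k₁ l₁ j =
      p j ^ n * (1 - (a₁ : ℂ) * p j) ^ (-k₁) * (1 - (b₁ : ℂ) / p j) ^ (-l₁))
    (Φb : ℤ → ℤ → ℤ → Fin N → ℂ)
    (hΦb : ∀ n k₁ l₁ j, Φb n k₁ l₁ j =
      (-(pb j)) ^ (-n) * (1 + (a₁ : ℂ) * pb j) ^ k₁ * (1 + (b₁ : ℂ) / pb j) ^ l₁)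
    (Ψ : ℤ → ℤ → ℤ → Fin N → ℂ)
    (hΨ : ∀ m k₂ l₂ j, Ψ m k₂ l₂ j =
      q j ^ m * (1 - (a₂ : ℂ) * q j) ^ (-k₂) * (1 - (b₂ : ℂ) / q j) ^ (-l₂))
    (Ψb : ℤ → ℤ → ℤ → Fin N → ℂ)
    (hΨb : ∀ m k₂ l₂ j, Ψb m k₂ l₂ j =
      (-(qb j)) ^ (-m) * (1 + (a₂ : ℂ) * qb j) ^ k₂ * (1 + (b₂ : ℂ) / qb j) ^ l₂)
    (f : ℤ → ℤ → ℤ → ℤ → ℤ → ℤ → ℂ)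
    (hf : ∀ m k₂ l₂ n k₁ l₁, f m k₂ l₂ n k₁ l₁ = blockDet (A n k₁ l₁) (B m k₂ l₂))
    (g : ℤ → ℤ → ℤ → ℤ → ℤ → ℤ → ℂ)
    (hg : ∀ m k₂ l₂ n k₁ l₁, g m k₂ l₂ n k₁ l₁ = borderedDet (A n k₁ l₁) (B m k₂ l₂)
      (Sum.elim (Φ n k₁ l₁) (fun _ => 0))
      (Sum.elim (fun _ => 0) (fun j => -(Ψb m k₂ l₂ j))))
    (gb : ℤ → ℤ → ℤ → ℤ → ℤ → ℤ → ℂ)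
    (hgb : ∀ m k₂ l₂ n k₁ l₁, gb m k₂ l₂ n k₁ l₁ = borderedDet (At n k₁ l₁) (B m k₂ l₂)
      (Sum.elim (fun _ => 0) (Ψ m k₂ l₂))
      (Sum.elim (fun j => -(Φb n k₁ l₁ j)) (fun _ => 0))) :
    ∀ n k₁ l₁ m k₂ l₂ : ℤ,
      (1 / (b₂ : ℂ)) * (f m k₂ (l₂ + 1) (n + 1) k₁ l₁ * f m k₂ l₂ n k₁ l₁
        - f m k₂ l₂ (n + 1) k₁ l₁ * f m k₂ (l₂ + 1) n k₁ l₁)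
      = -(μ * ν) * g (m + 1) k₂ l₂ n k₁ l₁ * gb (m - 1) k₂ (l₂ + 1) n k₁ l₁ := by
  intro n k₁ l₁ m k₂ l₂
  have hb₂c : (b₂ : ℂ) ≠ 0 := Complex.ofReal_ne_zero.mpr hb₂
  set c₁ : (Fin N ⊕ Fin N) → ℂ :=
    Sum.elim (fun i => μ * Φ n k₁ l₁ i) (fun _ => 0) with hc₁def
  set r₁ : (Fin N ⊕ Fin N) → ℂ :=
    Sum.elim (fun j => Φb n k₁ l₁ j) (fun _ => 0) with hr₁def
  set c₂ : (Fin N ⊕ Fin N) → ℂ :=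
    Sum.elim (fun _ => 0) (fun i => -((b₂ : ℂ) * ν) * Ψ (m-1) k₂ (l₂+1) i) with hc₂def
  set r₂ : (Fin N ⊕ Fin N) → ℂ :=
    Sum.elim (fun _ => 0) (fun j => Ψb (m+1) k₂ l₂ j) with hr₂def
  have hAadd : ∀ Bm : Matrix (Fin N) (Fin N) ℂ,
      Matrix.fromBlocks (A (n+1) k₁ l₁) (1 : Matrix (Fin N) (Fin N) ℂ)
        (-1 : Matrix (Fin N) (Fin N) ℂ) Bm + vecMulVec c₁ r₁
        = Matrix.fromBlocks (A n k₁ l₁) (1 : Matrix (Fin N) (Fin N) ℂ)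
            (-1 : Matrix (Fin N) (Fin N) ℂ) Bm := by
    intro Bm
    ext i j
    cases i with
    | inl i =>
      cases j with
      | inl j =>
        simp only [Matrix.add_apply, Matrix.fromBlocks_apply₁₁, vecMulVec_apply, hc₁def,
          hr₁def, Sum.elim_inl]
        simp only [hA, hΦ, hΦb]
        linear_combination (-1 : ℂ) * sc1 μ (p i) (pb j) (1 - (a₁:ℂ) * p i)
          (1 + (a₁:ℂ) * pb j) (1 - (b₁:ℂ) / p i) (1 + (b₁:ℂ) / pb j) (hp i) (hpb j)
          (hppb i j) (h1 i) (h2 j) (h5 i) (h6 j) n k₁ l₁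
      | inr j => simp [hc₁def, hr₁def, Matrix.vecMulVec_apply]
    | inr i => cases j <;> simp [hc₁def, hr₁def, Matrix.vecMulVec_apply]
  have hBadd : ∀ Am : Matrix (Fin N) (Fin N) ℂ,
      Matrix.fromBlocks Am (1 : Matrix (Fin N) (Fin N) ℂ)
        (-1 : Matrix (Fin N) (Fin N) ℂ) (B m k₂ l₂) + vecMulVec c₂ r₂
        = Matrix.fromBlocks Am (1 : Matrix (Fin N) (Fin N) ℂ)
            (-1 : Matrix (Fin N) (Fin N) ℂ) (B m k₂ (l₂+1)) := by
    intro Am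
    ext i j
    cases i with
    | inl i => cases j <;> simp [hc₂def, hr₂def, Matrix.vecMulVec_apply]
    | inr i =>
      cases j with
      | inl j => simp [hc₂def, hr₂def, Matrix.vecMulVec_apply]
      | inr j =>
        simp only [Matrix.add_apply, Matrix.fromBlocks_apply₂₂, vecMulVec_apply, hc₂def,
          hr₂def, Sum.elim_inr]
        simp only [hB, hΨ, hΨb]
        linear_combination (-1 : ℂ) * sc2 ν (b₂:ℂ) (q i) (qb j) (1 - (a₂:ℂ) * q i)
          (1 + (a₂:ℂ) * qb j) (hq i) (hqb j) (hqqb i j) (h3 i) (h4 j) (h7 i) (h8 j) m k₂ l₂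
  have hmadd : Matrix.fromBlocks (A n k₁ l₁) (1 : Matrix (Fin N) (Fin N) ℂ)
      (-1 : Matrix (Fin N) (Fin N) ℂ) (B m k₂ l₂)
      + vecMulVec (Sum.elim (fun _ => 0) (fun i => ν * Ψ m k₂ l₂ i)) r₂
      = Matrix.fromBlocks (A n k₁ l₁) (1 : Matrix (Fin N) (Fin N) ℂ)
          (-1 : Matrix (Fin N) (Fin N) ℂ) (B (m+1) k₂ l₂) := by
    ext i j
    cases i with
    | inl i => cases j <;> simp [hr₂def, Matrix.vecMulVec_apply]
    | inr i =>
      cases j with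
      | inl j => simp [hr₂def, Matrix.vecMulVec_apply]
      | inr j =>
        simp only [Matrix.add_apply, Matrix.fromBlocks_apply₂₂, vecMulVec_apply,
          hr₂def, Sum.elim_inr]
        simp only [hB, hΨ, hΨb]
        linear_combination (-1 : ℂ) * sc3 ν (q i) (qb j) (1 - (a₂:ℂ) * q i)
          (1 + (a₂:ℂ) * qb j) (1 - (b₂:ℂ) / q i) (1 + (b₂:ℂ) / qb j) (hq i) (hqb j)
          (hqqb i j) (h3 i) (h4 j) (h7 i) (h8 j) m k₂ l₂
  have hmsub : Matrix.fromBlocks (A (n+1) k₁ l₁) (1 : Matrix (Fin N) (Fin N) ℂ)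
      (-1 : Matrix (Fin N) (Fin N) ℂ) (B m k₂ l₂)
      + vecMulVec c₂ (Sum.elim (fun _ => 0) (fun j => Ψb m k₂ l₂ j / (b₂:ℂ)))
      = Matrix.fromBlocks (A (n+1) k₁ l₁) (1 : Matrix (Fin N) (Fin N) ℂ)
          (-1 : Matrix (Fin N) (Fin N) ℂ) (B (m-1) k₂ (l₂+1)) := by
    ext i j
    cases i with
    | inl i => cases j <;> simp [hc₂def, Matrix.vecMulVec_apply]
    | inr i =>
      cases j with
      | inl j => simp [hc₂def, Matrix.vecMulVec_apply]
      | inr j =>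
        simp only [Matrix.add_apply, Matrix.fromBlocks_apply₂₂, vecMulVec_apply,
          hc₂def, Sum.elim_inr]
        simp only [hB, hΨ, hΨb]
        linear_combination (-1 : ℂ) * sc4 ν (b₂:ℂ) (q i) (qb j) (1 - (a₂:ℂ) * q i)
          (1 + (a₂:ℂ) * qb j) (hq i) (hqb j) (hqqb i j) hb₂c (h3 i) (h4 j) (h7 i) (h8 j)
          m k₂ l₂
  have hAt1 : A (n+1) k₁ l₁ = At n k₁ l₁ := by
    ext i j
    simp only [hA, hAt]
    linear_combination (-(((1 - (a₁:ℂ) * p i) / (1 + (a₁:ℂ) * pb j))^(-k₁) *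
        ((1 - (b₁:ℂ) / p i) / (1 + (b₁:ℂ) / pb j))^(-l₁))) *
      sc5 μ (p i) (pb j) (hp i) (hpb j) (hppb i j) n
  have hG1 : bdet (Matrix.fromBlocks (A (n+1) k₁ l₁) (1 : Matrix (Fin N) (Fin N) ℂ)
      (-1 : Matrix (Fin N) (Fin N) ℂ) (B m k₂ l₂)) c₁ r₂
      = -μ * g (m+1) k₂ l₂ n k₁ l₁ := by
    rw [← bdet_col_absorb (Matrix.fromBlocks (A (n+1) k₁ l₁) (1 : Matrix (Fin N) (Fin N) ℂ)
      (-1 : Matrix (Fin N) (Fin N) ℂ) (B m k₂ l₂)) c₁ r₂ r₁, hAadd]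
    rw [← bdet_row_absorb (Matrix.fromBlocks (A n k₁ l₁) (1 : Matrix (Fin N) (Fin N) ℂ)
      (-1 : Matrix (Fin N) (Fin N) ℂ) (B m k₂ l₂)) c₁ r₂
      (Sum.elim (fun _ => 0) (fun i => ν * Ψ m k₂ l₂ i)), hmadd]
    have hc : c₁ = fun x => μ * (Sum.elim (Φ n k₁ l₁) (fun _ => 0) x) := by
      funext x; cases x <;> simp [hc₁def, Matrix.vecMulVec_apply]
    have hr : r₂ = fun x => (-1 : ℂ) *
        (Sum.elim (fun _ => (0:ℂ)) (fun j => -(Ψb (m+1) k₂ l₂ j)) x) := by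
      funext x; cases x <;> simp [hr₂def, Matrix.vecMulVec_apply]
    rw [hc, bdet_smul_col, hr, bdet_smul_row, hg, borderedDet_eq_bdet]
    ring
  have hG2 : bdet (Matrix.fromBlocks (A (n+1) k₁ l₁) (1 : Matrix (Fin N) (Fin N) ℂ)
      (-1 : Matrix (Fin N) (Fin N) ℂ) (B m k₂ l₂)) c₂ r₁
      = (b₂:ℂ) * ν * gb (m-1) k₂ (l₂+1) n k₁ l₁ := by
    rw [← bdet_col_absorb (Matrix.fromBlocks (A (n+1) k₁ l₁) (1 : Matrix (Fin N) (Fin N) ℂ)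
      (-1 : Matrix (Fin N) (Fin N) ℂ) (B m k₂ l₂)) c₂ r₁
      (Sum.elim (fun _ => 0) (fun j => Ψb m k₂ l₂ j / (b₂:ℂ))), hmsub, hAt1]
    have hc : c₂ = fun x => (-((b₂:ℂ) * ν)) *
        (Sum.elim (fun _ => (0:ℂ)) (Ψ (m-1) k₂ (l₂+1)) x) := by
      funext x; cases x <;> simp [hc₂def, Matrix.vecMulVec_apply]
    have hr : r₁ = fun x => (-1 : ℂ) *
        (Sum.elim (fun j => -(Φb n k₁ l₁ j)) (fun _ => (0:ℂ)) x) := by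
      funext x; cases x <;> simp [hr₁def, Matrix.vecMulVec_apply]
    rw [hc, bdet_smul_col, hr, bdet_smul_row, hgb, borderedDet_eq_bdet]
    ring
  have key := master (Matrix.fromBlocks (A (n+1) k₁ l₁) (1 : Matrix (Fin N) (Fin N) ℂ)
    (-1 : Matrix (Fin N) (Fin N) ℂ) (B m k₂ l₂)) c₁ r₁ c₂ r₂
  rw [hAadd, hBadd, hBadd] at key
  have hfd : ∀ (m' l₂' n' : ℤ),
      (Matrix.fromBlocks (A n' k₁ l₁) (1 : Matrix (Fin N) (Fin N) ℂ)
        (-1 : Matrix (Fin N) (Fin N) ℂ) (B m' k₂ l₂')).det = f m' k₂ l₂' n' k₁ l₁ := by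
    intro m' l₂' n'
    rw [hf]
    rfl
  simp only [hfd] at key
  rw [hG1, hG2] at key
  rw [one_div, inv_mul_eq_iff_eq_mul₀ hb₂c]
  linear_combination (-1 : ℂ) * key
end

section
/- Let N ≥ 1, let p_1,…,p_N, p̄_1,…,p̄_N, q_1,…,q_N, q̄_1,…,q̄_N ∈ ℂ be nonzero with p_i + p̄_j ≠ 0 and q_i + q̄_j ≠ 0 for all i,j, let μ, ν, ξ_{i0}, ξ̄_{j0}, η_{i0}, η̄_{j0} ∈ ℂ, let a₁, a₂ ∈ ℝ be nonzero with 1 − a₁ p_i ≠ 0, 1 + a₁ p̄_j ≠ 0, 1 − a₂ q_i ≠ 0, 1 + a₂ q̄_j ≠ 0 for all i,j, and let x₋₁, y₋₁ ∈ ℝ. Set ξ_i = x₋₁/p_i + ξ_{i0}, ξ̄_j = x₋₁/p̄_j + ξ̄_{j0}, η_i = y₋₁/q_i + η_{i0}, η̄_j = y₋₁/q̄_j + η̄_{j0}. For n, k₁, m, k₂ ∈ ℤ define: A(n,k₁) the N×N matrix with entry (μ p̄_j/(p_i+p̄_j))·(−p_i/p̄_j)^n·((1−a₁p_i)/(1+a₁p̄_j))^{−k₁}·exp(ξ_i+ξ̄_j);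 Ã(n,k₁) with entry (−μ p_i/(p_i+p̄_j))·(−p_i/p̄_j)^n·((1−a₁p_i)/(1+a₁p̄_j))^{−k₁}·exp(ξ_i+ξ̄_j); B(m,k₂) with entry (ν/(q_i+q̄_j))·(−q_i/q̄_j)^m·((1−a₂q_i)/(1+a₂q̄_j))^{−k₂}·exp(η_i+η̄_j); row vectors Φ(n,k₁) with j-th entry p_j^n (1−a₁p_j)^{−k₁} exp(ξ_j), Φ̄(n,k₁) with j-th entry (−p̄_j)^{−n}(1+a₁p̄_j)^{k₁} exp(ξ̄_j), Ψ(m,k₂) with j-th entry q_j^m (1−a₂q_j)^{−k₂} exp(η_j), Ψ̄(m,k₂) with j-th entry (−q̄_j)^{−m}(1+a₂q̄_j)^{k₂} exp(η̄_j). Set f^{m,k₂}_{n,k₁} = det[[A(n,k₁), I],[−I, B(m,k₂)]], g^{m,k₂}_{n,k₁} = det[[A(n,k₁), I, Φ(n,k₁)ᵀ],[−I, B(m,k₂), 0],[0, −Ψ̄(m,k₂), 0]], and ḡ^{m,k₂}_{n,k₁} = det[[Ã(n,k₁), I, 0],[−I, B(m,k₂), Ψ(m,k₂)ᵀ],[−Φ̄(n,k₁),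 0, 0]]. Then for all n, k₁, m, k₂ ∈ ℤ: (1/a₂)·(f^{m,k₂+1}_{n+1,k₁}·f^{m,k₂}_{n,k₁} − f^{m,k₂}_{n+1,k₁}·f^{m,k₂+1}_{n,k₁}) = μ·ν·g^{m,k₂}_{n,k₁}·ḡ^{m,k₂+1}_{n,k₁}. -/
open Matrix

/-!
Let `M` be the block matrix of `f^{m,k₂}_{n,k₁}`. Raising `n` adds the rank-one matrix
`-μ Φᵀ Φ̄` to the block `A`, raising `k₂` adds `a₂ ν Ψ(k₂+1)ᵀ Ψ̄(k₂)` to the block `B`, and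
`Ã(n) = A(n+1)`. So the four values of `f` are `det M`, `det (M + X)`, `det (M + Y)` and
`det (M + X + Y)` for rank-one matrices `X = α a bᵀ`, `Y = β c dᵀ`, and the bilinear equation is
the rank-two Desnanot–Jacobi identity
`det (M + X + Y) det M - det (M + X) det (M + Y)
  = -αβ det [[M, c], [bᵀ, 0]] det [[M, a], [dᵀ, 0]]`.
Its bordered determinants are `g` and, once the border of `ḡ` has cleared the updates `X`, `Y`
of its matrix by row and column operations, `ḡ`. For invertible `M` the identity follows from
the matrix determinant lemma, and it extends to all `M` by continuity, since `M + t • 1` is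
invertible for all but finitely many `t`.
-/

namespace Matrix

variable {ι R : Type*} [Fintype ι] [DecidableEq ι] [CommRing R]

noncomputable def borderDet (M : Matrix ι ι R) (u v : ι → R) : R :=
  (fromBlocks M (replicateCol (Fin 1) u) (replicateRow (Fin 1) v) 0).det

theorem borderDet_add_vecMulVec_row (M : Matrix ι ι R) (u v x : ι → R) :
    borderDet (M + vecMulVec x v) u v = borderDet M u v := by
  have h : fromBlocks 1 (replicateCol (Fin 1) x) 0 1 *
        fromBlocks M (replicateCol (Fin 1) u) (replicateRow (Fin 1) v) 0 =
      fromBlocks (M + vecMulVec x v) (replicateCol (Fin 1) u) (replicateRow (Fin 1) v) 0 := by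
    simp [fromBlocks_multiply, vecMulVec_eq (Fin 1)]; rfl
  rw [borderDet, ← h, det_mul, det_fromBlocks_zero₂₁, det_one, det_one, one_mul, one_mul,
    borderDet]

theorem borderDet_add_vecMulVec_col (M : Matrix ι ι R) (u v y : ι → R) :
    borderDet (M + vecMulVec u y) u v = borderDet M u v := by
  have h : fromBlocks M (replicateCol (Fin 1) u) (replicateRow (Fin 1) v) 0 *
        fromBlocks 1 0 (replicateRow (Fin 1) y) 1 =
      fromBlocks (M + vecMulVec u y) (replicateCol (Fin 1) u) (replicateRow (Fin 1) v) 0 := by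
    simp [fromBlocks_multiply, vecMulVec_eq (Fin 1)]; rfl
  rw [borderDet, ← h, det_mul, det_fromBlocks_zero₁₂, det_one, det_one, mul_one, mul_one,
    borderDet]

theorem borderDet_neg_row (M : Matrix ι ι R) (u v : ι → R) :
    borderDet M u (-v) = -borderDet M u v := by
  have h : fromBlocks 1 0 0 (-1) *
        fromBlocks M (replicateCol (Fin 1) u) (replicateRow (Fin 1) v) 0 =
      fromBlocks M (replicateCol (Fin 1) u) (replicateRow (Fin 1) (-v)) 0 := by
    simp [fromBlocks_multiply]; rfl
  rw [borderDet, ← h, det_mul, det_fromBlocks_zero₂₁, det_one, one_mul, det_neg, borderDet]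
  simp

theorem borderDet_eq_of_isUnit {M : Matrix ι ι R} (hM : IsUnit M.det) (u v : ι → R) :
    borderDet M u v = -(M.det * (v ⬝ᵥ M⁻¹ *ᵥ u)) := by
  have := M.invertibleOfIsUnitDet hM
  rw [borderDet, det_fromBlocks₁₁, invOf_eq_nonsing_inv, det_fin_one]
  simp only [zero_sub, neg_apply, mul_neg, neg_inj, dotProduct_mulVec]
  rfl

theorem det_add_vecMulVec_add_vecMulVec_of_isUnit {M : Matrix ι ι R} (hM : IsUnit M.det)
    (a b c d : ι → R) :
    (M + vecMulVec a b + vecMulVec c d).det =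
      M.det * ((1 + b ⬝ᵥ M⁻¹ *ᵥ a) * (1 + d ⬝ᵥ M⁻¹ *ᵥ c)
        - (b ⬝ᵥ M⁻¹ *ᵥ c) * (d ⬝ᵥ M⁻¹ *ᵥ a)) := by
  have hUV : vecMulVec a b + vecMulVec c d = (of ![a, c])ᵀ * of ![b, d] := by
    ext i j
    simp [mul_apply, Fin.sum_univ_two, vecMulVec_apply]
  have hentry : ∀ k l,
      (of ![b, d] * M⁻¹ * (of ![a, c])ᵀ) k l = ![b, d] k ⬝ᵥ M⁻¹ *ᵥ ![a, c] l := by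
    intro k l
    rw [mul_apply', dotProduct_mulVec]
    rfl
  rw [add_assoc, hUV, det_add_mul _ _ hM, det_fin_two]
  simp only [add_apply, hentry]
  simp

theorem det_add_smul_vecMulVec_add_smul_vecMulVec_mul_det_sub_of_isUnit {M : Matrix ι ι R}
    (hM : IsUnit M.det) (a b c d : ι → R) (α β : R) :
    (M + α • vecMulVec a b + β • vecMulVec c d).det * M.det
      - (M + α • vecMulVec a b).det * (M + β • vecMulVec c d).det
      = -(α * β) * borderDet M c b * borderDet M a d := by
  have hab := det_add_vecMulVec_add_vecMulVec_of_isUnit hM (α • a) b 0 0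
  have hcd := det_add_vecMulVec_add_vecMulVec_of_isUnit hM (β • c) d 0 0
  simp only [vecMulVec_zero, add_zero] at hab hcd
  rw [← smul_vecMulVec, ← smul_vecMulVec, det_add_vecMulVec_add_vecMulVec_of_isUnit hM, hab,
    hcd, borderDet_eq_of_isUnit hM, borderDet_eq_of_isUnit hM]
  simp only [mulVec_smul, dotProduct_smul, smul_eq_mul, mulVec_zero, dotProduct_zero]
  ring

theorem det_add_smul_vecMulVec_add_smul_vecMulVec_mul_det_sub {𝕜 : Type*}
    [NontriviallyNormedField 𝕜] [CompleteSpace 𝕜] (M : Matrix ι ι 𝕜) (a b c d : ι → 𝕜)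
    (α β : 𝕜) :
    (M + α • vecMulVec a b + β • vecMulVec c d).det * M.det
      - (M + α • vecMulVec a b).det * (M + β • vecMulVec c d).det
      = -(α * β) * borderDet M c b * borderDet M a d := by
  have hsing : {t : 𝕜 | (M + t • 1).det = 0}.Finite := by
    refine (Polynomial.finite_setOfPred_isRoot (charpoly_monic (-M)).ne_zero).subset
      fun t ht => ?_
    simpa [eval_charpoly, add_comm, smul_one_eq_diagonal] using ht
  have key := Continuous.ext_on (hsing.countable.dense_compl 𝕜) (f := fun t : 𝕜 =>
      (M + t • 1 + α • vecMulVec a b + β • vecMulVec c d).det * (M + t • 1).det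
        - (M + t • 1 + α • vecMulVec a b).det * (M + t • 1 + β • vecMulVec c d).det)
    (g := fun t => -(α * β) * borderDet (M + t • 1) c b * borderDet (M + t • 1) a d)
    (by fun_prop) (by unfold borderDet; fun_prop)
    (fun t ht => det_add_smul_vecMulVec_add_smul_vecMulVec_mul_det_sub_of_isUnit
      (isUnit_iff_ne_zero.2 ht) a b c d α β)
  simpa using congrFun key 0

end Matrix

theorem neg_div_zpow_mul_div_zpow_neg {K : Type*} [Field K] (x y u v : K) (n k : ℤ) :
    (-x / y) ^ n * (u / v) ^ (-k) = x ^ n * u ^ (-k) * ((-y) ^ (-n) * v ^ k) := by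
  rw [← neg_div_neg_eq, neg_neg, div_zpow, div_zpow, zpow_neg v, zpow_neg (-y), div_inv_eq_mul]
  ring

section GramShift

variable {N : ℕ} {p pb : Fin N → ℂ} {μ a : ℂ} {ξ ξb : Fin N → ℂ}
  {A At : ℤ → ℤ → Matrix (Fin N) (Fin N) ℂ} {Φ Φb : ℤ → ℤ → Fin N → ℂ}

theorem gramA_succ_eq_gramAt (hp : ∀ i, p i ≠ 0) (hpb : ∀ i, pb i ≠ 0)
    (hA : ∀ n k i j, A n k i j =
      (μ * pb j / (p i + pb j)) * (-(p i) / pb j) ^ n *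
      ((1 - a * p i) / (1 + a * pb j)) ^ (-k) * Complex.exp (ξ i + ξb j))
    (hAt : ∀ n k i j, At n k i j =
      (-μ * p i / (p i + pb j)) * (-(p i) / pb j) ^ n *
      ((1 - a * p i) / (1 + a * pb j)) ^ (-k) * Complex.exp (ξ i + ξb j)) (n k : ℤ) :
    A (n + 1) k = At n k := by
  ext i j
  rw [hA, hAt, zpow_add_one₀ (div_ne_zero (neg_ne_zero.2 (hp i)) (hpb j))]
  field_simp [hpb j]

theorem gramA_succ_eq_add_vecMulVec (hp : ∀ i, p i ≠ 0) (hpb : ∀ i, pb i ≠ 0)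
    (hppb : ∀ i j, p i + pb j ≠ 0)
    (hA : ∀ n k i j, A n k i j =
      (μ * pb j / (p i + pb j)) * (-(p i) / pb j) ^ n *
      ((1 - a * p i) / (1 + a * pb j)) ^ (-k) * Complex.exp (ξ i + ξb j))
    (hΦ : ∀ n k j, Φ n k j = p j ^ n * (1 - a * p j) ^ (-k) * Complex.exp (ξ j))
    (hΦb : ∀ n k j, Φb n k j = (-(pb j)) ^ (-n) * (1 + a * pb j) ^ k * Complex.exp (ξb j))
    (n k : ℤ) :
    A (n + 1) k = A n k + (-μ) • vecMulVec (Φ n k) (Φb n k) := by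
  ext i j
  have hcoeff : μ * pb j / (p i + pb j) * (-p i / pb j - 1) = -μ := by
    field_simp [hpb j, hppb i j]
    ring
  rw [Matrix.add_apply, Matrix.smul_apply, vecMulVec_apply, smul_eq_mul, hA, hA, hΦ, hΦb,
    zpow_add_one₀ (div_ne_zero (neg_ne_zero.2 (hp i)) (hpb j)), Complex.exp_add]
  linear_combination ((-p i / pb j) ^ n * ((1 - a * p i) / (1 + a * pb j)) ^ (-k) *
      (Complex.exp (ξ i) * Complex.exp (ξb j))) * hcoeff -
    μ * Complex.exp (ξ i) * Complex.exp (ξb j) *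
      neg_div_zpow_mul_div_zpow_neg (p i) (pb j) (1 - a * p i) (1 + a * pb j) n k

end GramShift

theorem gramB_succ_eq_add_vecMulVec {N : ℕ} {q qb : Fin N → ℂ} {ν a : ℂ} {η ηb : Fin N → ℂ}
    {B : ℤ → ℤ → Matrix (Fin N) (Fin N) ℂ} {Ψ Ψb : ℤ → ℤ → Fin N → ℂ}
    (hqqb : ∀ i j, q i + qb j ≠ 0)
    (hu : ∀ i, 1 - a * q i ≠ 0) (hv : ∀ j, 1 + a * qb j ≠ 0)
    (hB : ∀ m k i j, B m k i j =
      (ν / (q i + qb j)) * (-(q i) / qb j) ^ m *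
      ((1 - a * q i) / (1 + a * qb j)) ^ (-k) * Complex.exp (η i + ηb j))
    (hΨ : ∀ m k j, Ψ m k j = q j ^ m * (1 - a * q j) ^ (-k) * Complex.exp (η j))
    (hΨb : ∀ m k j, Ψb m k j = (-(qb j)) ^ (-m) * (1 + a * qb j) ^ k * Complex.exp (ηb j))
    (m k : ℤ) :
    B m (k + 1) = B m k + (a * ν) • vecMulVec (Ψ m (k + 1)) (Ψb m k) := by
  ext i j
  have hcoeff : ν / (q i + qb j) * (((1 - a * q i) / (1 + a * qb j))⁻¹ - 1) =
      a * ν / (1 - a * q i) := by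
    rw [inv_div, div_sub_one (hu i),
      show 1 + a * qb j - (1 - a * q i) = a * (q i + qb j) by ring]
    field_simp [hqqb i j]
  rw [Matrix.add_apply, Matrix.smul_apply, vecMulVec_apply, hB, hB, hΨ, hΨb, neg_add,
    zpow_add₀ (div_ne_zero (hu i) (hv j)), zpow_add₀ (hu i), _root_.zpow_neg_one,
    _root_.zpow_neg_one, Complex.exp_add, smul_eq_mul]
  linear_combination ((-q i / qb j) ^ m * ((1 - a * q i) / (1 + a * qb j)) ^ (-k) *
      (Complex.exp (η i) * Complex.exp (ηb j))) * hcoeff +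
    a * ν / (1 - a * q i) * Complex.exp (η i) * Complex.exp (ηb j) *
      neg_div_zpow_mul_div_zpow_neg (q i) (qb j) (1 - a * q i) (1 + a * qb j) m k

theorem fromBlocks_add_smul_vecMulVec_sumElim {l m R : Type*} [Mul R] [Add R]
    (A : Matrix l l R) (B : Matrix l m R) (C : Matrix m l R) (D : Matrix m m R)
    (a b : l → R) (a' b' : m → R) (α : R) :
    fromBlocks A B C D + α • vecMulVec (Sum.elim a a') (Sum.elim b b') =
      fromBlocks (A + α • vecMulVec a b) (B + α • vecMulVec a b')
        (C + α • vecMulVec a' b) (D + α • vecMulVec a' b') := by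
  ext (i | i) (j | j) <;> rfl

theorem borderedDet_eq_borderDet {N : ℕ} (A B : Matrix (Fin N) (Fin N) ℂ)
    (col row : Fin N ⊕ Fin N → ℂ) :
    borderedDet A B col row = borderDet (fromBlocks A 1 (-1) B) col row :=
  rfl

theorem blockDet_add_smul_vecMulVec_bilinear {N : ℕ} (A B : Matrix (Fin N) (Fin N) ℂ)
    (φ φb ψ ψb : Fin N → ℂ) (α β : ℂ) :
    blockDet (A + α • vecMulVec φ φb) (B + β • vecMulVec ψ ψb) * blockDet A B
      - blockDet (A + α • vecMulVec φ φb) B * blockDet A (B + β • vecMulVec ψ ψb)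
      = -(α * β)
        * borderedDet A B (Sum.elim φ fun _ => 0) (Sum.elim (fun _ => 0) fun j => -ψb j)
        * borderedDet (A + α • vecMulVec φ φb) (B + β • vecMulVec ψ ψb)
            (Sum.elim (fun _ => 0) ψ) (Sum.elim (fun j => -φb j) fun _ => 0) := by
  set M := fromBlocks A 1 (-1) B
  set a : Fin N ⊕ Fin N → ℂ := Sum.elim φ fun _ => 0
  set b : Fin N ⊕ Fin N → ℂ := Sum.elim φb fun _ => 0
  set c : Fin N ⊕ Fin N → ℂ := Sum.elim (fun _ => 0) ψ
  set d : Fin N ⊕ Fin N → ℂ := Sum.elim (fun _ => 0) ψb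
  have hA : fromBlocks (A + α • vecMulVec φ φb) 1 (-1) B = M + α • vecMulVec a b := by
    simp [M, a, b, fromBlocks_add_smul_vecMulVec_sumElim, ← Pi.zero_def]
  have hB : fromBlocks A 1 (-1) (B + β • vecMulVec ψ ψb) = M + β • vecMulVec c d := by
    simp [M, c, d, fromBlocks_add_smul_vecMulVec_sumElim, ← Pi.zero_def]
  have hAB : fromBlocks (A + α • vecMulVec φ φb) 1 (-1) (B + β • vecMulVec ψ ψb) =
      M + α • vecMulVec a b + β • vecMulVec c d := by
    simp [M, a, b, c, d, fromBlocks_add_smul_vecMulVec_sumElim, ← Pi.zero_def]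
  have hd : (Sum.elim (fun _ => 0) fun j => -ψb j) = -d := by
    ext (i | i) <;> simp [d]
  have hb : (Sum.elim (fun j => -φb j) fun _ => 0) = -b := by
    ext (i | i) <;> simp [b]
  have hgb : borderDet (M + α • vecMulVec a b + β • vecMulVec c d) c b = borderDet M c b := by
    rw [← vecMulVec_smul β c d, borderDet_add_vecMulVec_col, ← smul_vecMulVec,
      borderDet_add_vecMulVec_row]
  simp only [blockDet, borderedDet_eq_borderDet]
  rw [hA, hB, hAB, hd, hb, borderDet_neg_row, borderDet_neg_row, hgb,
    det_add_smul_vecMulVec_add_smul_vecMulVec_mul_det_sub]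
  ring

theorem discrete_toda_bilinear_k2_general (N : ℕ)
    (p pb q qb : Fin N → ℂ)
    (hp : ∀ i, p i ≠ 0) (hpb : ∀ i, pb i ≠ 0)
    (hppb : ∀ i j, p i + pb j ≠ 0) (hqqb : ∀ i j, q i + qb j ≠ 0)
    (μ ν : ℂ)
    (a₁ a₂ : ℝ) (ha₂ : a₂ ≠ 0)
    (h3 : ∀ i, 1 - (a₂ : ℂ) * q i ≠ 0) (h4 : ∀ j, 1 + (a₂ : ℂ) * qb j ≠ 0)
    (ξ ξb η ηb : Fin N → ℂ)
    (A : ℤ → ℤ → Matrix (Fin N) (Fin N) ℂ)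
    (hA : ∀ n k₁ i j, A n k₁ i j =
      (μ * pb j / (p i + pb j)) * (-(p i) / pb j) ^ n *
      ((1 - (a₁ : ℂ) * p i) / (1 + (a₁ : ℂ) * pb j)) ^ (-k₁) *
      Complex.exp (ξ i + ξb j))
    (At : ℤ → ℤ → Matrix (Fin N) (Fin N) ℂ)
    (hAt : ∀ n k₁ i j, At n k₁ i j =
      (-μ * p i / (p i + pb j)) * (-(p i) / pb j) ^ n *
      ((1 - (a₁ : ℂ) * p i) / (1 + (a₁ : ℂ) * pb j)) ^ (-k₁) *
      Complex.exp (ξ i + ξb j))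
    (B : ℤ → ℤ → Matrix (Fin N) (Fin N) ℂ)
    (hB : ∀ m k₂ i j, B m k₂ i j =
      (ν / (q i + qb j)) * (-(q i) / qb j) ^ m *
      ((1 - (a₂ : ℂ) * q i) / (1 + (a₂ : ℂ) * qb j)) ^ (-k₂) *
      Complex.exp (η i + ηb j))
    (Φ : ℤ → ℤ → Fin N → ℂ)
    (hΦ : ∀ n k₁ j, Φ n k₁ j =
      p j ^ n * (1 - (a₁ : ℂ) * p j) ^ (-k₁) * Complex.exp (ξ j))
    (Φb : ℤ → ℤ → Fin N → ℂ)
    (hΦb : ∀ n k₁ j, Φb n k₁ j =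
      (-(pb j)) ^ (-n) * (1 + (a₁ : ℂ) * pb j) ^ k₁ * Complex.exp (ξb j))
    (Ψ : ℤ → ℤ → Fin N → ℂ)
    (hΨ : ∀ m k₂ j, Ψ m k₂ j =
      q j ^ m * (1 - (a₂ : ℂ) * q j) ^ (-k₂) * Complex.exp (η j))
    (Ψb : ℤ → ℤ → Fin N → ℂ)
    (hΨb : ∀ m k₂ j, Ψb m k₂ j =
      (-(qb j)) ^ (-m) * (1 + (a₂ : ℂ) * qb j) ^ k₂ * Complex.exp (ηb j))
    (f : ℤ → ℤ → ℤ → ℤ → ℂ)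
    (hf : ∀ m k₂ n k₁, f m k₂ n k₁ = blockDet (A n k₁) (B m k₂))
    (g : ℤ → ℤ → ℤ → ℤ → ℂ)
    (hg : ∀ m k₂ n k₁, g m k₂ n k₁ = borderedDet (A n k₁) (B m k₂)
      (Sum.elim (Φ n k₁) (fun _ => 0))
      (Sum.elim (fun _ => 0) (fun j => -(Ψb m k₂ j))))
    (gb : ℤ → ℤ → ℤ → ℤ → ℂ)
    (hgb : ∀ m k₂ n k₁, gb m k₂ n k₁ = borderedDet (At n k₁) (B m k₂)
      (Sum.elim (fun _ => 0) (Ψ m k₂))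
      (Sum.elim (fun j => -(Φb n k₁ j)) (fun _ => 0))) :
    ∀ n k₁ m k₂ : ℤ,
      (1 / (a₂ : ℂ)) * (f m (k₂ + 1) (n + 1) k₁ * f m k₂ n k₁
        - f m k₂ (n + 1) k₁ * f m (k₂ + 1) n k₁)
      = μ * ν * g m k₂ n k₁ * gb m (k₂ + 1) n k₁ := by
  intro n k₁ m k₂
  rw [hf, hf, hf, hf, hg, hgb, ← gramA_succ_eq_gramAt hp hpb hA hAt,
    gramA_succ_eq_add_vecMulVec hp hpb hppb hA hΦ hΦb,
    gramB_succ_eq_add_vecMulVec hqqb h3 h4 hB hΨ hΨb, blockDet_add_smul_vecMulVec_bilinear]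
  field_simp [Complex.ofReal_ne_zero.2 ha₂]

/-- Discrete Toda-type bilinear equation in the `k₂` direction for the Gram-type tau
functions of the two-component (semi-discrete) KP–Toda hierarchy. -/
theorem discrete_toda_bilinear_k2 (N : ℕ) (hN : 1 ≤ N)
    (p pb q qb : Fin N → ℂ)
    (hp : ∀ i, p i ≠ 0) (hpb : ∀ i, pb i ≠ 0) (hq : ∀ i, q i ≠ 0) (hqb : ∀ i, qb i ≠ 0)
    (hppb : ∀ i j, p i + pb j ≠ 0) (hqqb : ∀ i j, q i + qb j ≠ 0)
    (μ ν : ℂ) (ξ0 ξb0 η0 ηb0 : Fin N → ℂ)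
    (a₁ a₂ : ℝ) (ha₁ : a₁ ≠ 0) (ha₂ : a₂ ≠ 0)
    (h1 : ∀ i, 1 - (a₁ : ℂ) * p i ≠ 0) (h2 : ∀ j, 1 + (a₁ : ℂ) * pb j ≠ 0)
    (h3 : ∀ i, 1 - (a₂ : ℂ) * q i ≠ 0) (h4 : ∀ j, 1 + (a₂ : ℂ) * qb j ≠ 0)
    (x y : ℝ)
    (ξ ξb η ηb : Fin N → ℂ)
    (hξ : ∀ i, ξ i = (x : ℂ) / p i + ξ0 i)
    (hξb : ∀ j, ξb j = (x : ℂ) / pb j + ξb0 j)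
    (hη : ∀ i, η i = (y : ℂ) / q i + η0 i)
    (hηb : ∀ j, ηb j = (y : ℂ) / qb j + ηb0 j)
    (A : ℤ → ℤ → Matrix (Fin N) (Fin N) ℂ)
    (hA : ∀ n k₁ i j, A n k₁ i j =
      (μ * pb j / (p i + pb j)) * (-(p i) / pb j) ^ n *
      ((1 - (a₁ : ℂ) * p i) / (1 + (a₁ : ℂ) * pb j)) ^ (-k₁) *
      Complex.exp (ξ i + ξb j))
    (At : ℤ → ℤ → Matrix (Fin N) (Fin N) ℂ)
    (hAt : ∀ n k₁ i j, At n k₁ i j =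
      (-μ * p i / (p i + pb j)) * (-(p i) / pb j) ^ n *
      ((1 - (a₁ : ℂ) * p i) / (1 + (a₁ : ℂ) * pb j)) ^ (-k₁) *
      Complex.exp (ξ i + ξb j))
    (B : ℤ → ℤ → Matrix (Fin N) (Fin N) ℂ)
    (hB : ∀ m k₂ i j, B m k₂ i j =
      (ν / (q i + qb j)) * (-(q i) / qb j) ^ m *
      ((1 - (a₂ : ℂ) * q i) / (1 + (a₂ : ℂ) * qb j)) ^ (-k₂) *
      Complex.exp (η i + ηb j))
    (Φ : ℤ → ℤ → Fin N → ℂ)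
    (hΦ : ∀ n k₁ j, Φ n k₁ j =
      p j ^ n * (1 - (a₁ : ℂ) * p j) ^ (-k₁) * Complex.exp (ξ j))
    (Φb : ℤ → ℤ → Fin N → ℂ)
    (hΦb : ∀ n k₁ j, Φb n k₁ j =
      (-(pb j)) ^ (-n) * (1 + (a₁ : ℂ) * pb j) ^ k₁ * Complex.exp (ξb j))
    (Ψ : ℤ → ℤ → Fin N → ℂ)
    (hΨ : ∀ m k₂ j, Ψ m k₂ j =
      q j ^ m * (1 - (a₂ : ℂ) * q j) ^ (-k₂) * Complex.exp (η j))
    (Ψb : ℤ → ℤ → Fin N → ℂ)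
    (hΨb : ∀ m k₂ j, Ψb m k₂ j =
      (-(qb j)) ^ (-m) * (1 + (a₂ : ℂ) * qb j) ^ k₂ * Complex.exp (ηb j))
    (f : ℤ → ℤ → ℤ → ℤ → ℂ)
    (hf : ∀ m k₂ n k₁, f m k₂ n k₁ = blockDet (A n k₁) (B m k₂))
    (g : ℤ → ℤ → ℤ → ℤ → ℂ)
    (hg : ∀ m k₂ n k₁, g m k₂ n k₁ = borderedDet (A n k₁) (B m k₂)
      (Sum.elim (Φ n k₁) (fun _ => 0))
      (Sum.elim (fun _ => 0) (fun j => -(Ψb m k₂ j))))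
    (gb : ℤ → ℤ → ℤ → ℤ → ℂ)
    (hgb : ∀ m k₂ n k₁, gb m k₂ n k₁ = borderedDet (At n k₁) (B m k₂)
      (Sum.elim (fun _ => 0) (Ψ m k₂))
      (Sum.elim (fun j => -(Φb n k₁ j)) (fun _ => 0))) :
    ∀ n k₁ m k₂ : ℤ,
      (1 / (a₂ : ℂ)) * (f m (k₂ + 1) (n + 1) k₁ * f m k₂ n k₁
        - f m k₂ (n + 1) k₁ * f m (k₂ + 1) n k₁)
      = μ * ν * g m k₂ n k₁ * gb m (k₂ + 1) n k₁ :=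
  discrete_toda_bilinear_k2_general N p pb q qb hp hpb hppb hqqb μ ν a₁ a₂ ha₂ h3 h4 ξ ξb η ηb A hA
    At hAt B hB Φ hΦ Φb hΦb Ψ hΨ Ψb hΨb f hf g hg gb hgb
end
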